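/- arXiv:2506.03047 — 7 statements merged into one kernel-verified Lean document; each statement's English description precedes it below -/
import Mathlib

section
/- Let α ∈ (0,1), δ = 1−α, and c_α = (α/δ)^α. Set c₁ = c_α/(c_α+1) and c₂ = max(1, α/δ). Then for all y > 0: c₁·(y^(−α)+1) ≤ [1−(y+1)^(−δ/α)]^(−α) ≤ c₂·(y^(−α)+1). -/
open Real

/-!
Put `β = δ/α` and `u = 1 - (y+1)^(-β)`, so the middle term is `u^(-α)`. Two elementary bounds
squeeze `u`: from above `u ≤ β y` (`e^x ≥ 1 + x` and `log (1+y) ≤ y`), and from below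
`u ≥ min 1 β · y/(y+1)` (`w^β ≤ w` for `β ≥ 1`, Bernoulli for `β ≤ 1`, at `w = 1/(y+1)`).
Raising to the power `-α` turns the first into `u^(-α) ≥ c_α y^(-α)`, which is averaged with the
trivial `u^(-α) ≥ 1`; the second gives `u^(-α) ≤ c₂ (1 + 1/y)^α ≤ c₂ (y^(-α) + 1)` by
subadditivity of `x ↦ x^α`.
-/

lemma one_sub_rpow_neg_le_mul {β y : ℝ} (hβ : 0 ≤ β) (hy : 0 < y + 1) :
    1 - (y + 1) ^ (-β) ≤ β * y := by
  have hlog : log (y + 1) ≤ y := by linarith [log_le_sub_one_of_pos hy]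
  have hexp : 1 - β * log (y + 1) ≤ (y + 1) ^ (-β) := by
    rw [rpow_def_of_pos hy]
    linarith [add_one_le_exp (log (y + 1) * -β)]
  nlinarith

lemma min_one_mul_one_sub_le_one_sub_rpow {w β : ℝ} (hw0 : 0 ≤ w) (hw1 : w ≤ 1) (hβ : 0 ≤ β) :
    min 1 β * (1 - w) ≤ 1 - w ^ β := by
  rcases le_total 1 β with hβ1 | hβ1
  · rw [min_eq_left hβ1, one_mul]
    linarith [rpow_le_self_of_le_one hw0 hw1 hβ1]
  · rw [min_eq_right hβ1]
    have := rpow_one_add_le_one_add_mul_self (by linarith : -1 ≤ w - 1) hβ hβ1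
    rw [add_sub_cancel] at this
    linarith

lemma rpow_neg_div_add_one_le {a y : ℝ} (ha0 : 0 ≤ a) (ha1 : a ≤ 1) (hy : 0 < y) :
    (y / (y + 1)) ^ (-a) ≤ y ^ (-a) + 1 := by
  have hinv : (y / (y + 1))⁻¹ = y⁻¹ + 1 := by field_simp; ring
  rw [rpow_neg (by positivity), ← inv_rpow (by positivity), hinv, rpow_neg hy.le,
    ← inv_rpow hy.le]
  simpa using rpow_add_le_add_rpow (inv_nonneg.2 hy.le) zero_le_one ha0 ha1

lemma div_add_one_mul_le_rpow_neg {a b u y : ℝ} (ha : 0 ≤ a) (hb : 0 < b) (hy : 0 < y)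
    (hu0 : 0 < u) (hu1 : u ≤ 1) (hub : u ≤ b * y) :
    b⁻¹ ^ a / (b⁻¹ ^ a + 1) * (y ^ (-a) + 1) ≤ u ^ (-a) := by
  have hc : 0 < b⁻¹ ^ a := by positivity
  have hone : 1 ≤ u ^ (-a) := one_le_rpow_of_pos_of_le_one_of_nonpos hu0 hu1 (by linarith)
  have hmain : b⁻¹ ^ a * y ^ (-a) ≤ u ^ (-a) := by
    calc b⁻¹ ^ a * y ^ (-a) = (b * y) ^ (-a) := by
          rw [mul_rpow hb.le hy.le, inv_rpow hb.le, rpow_neg hb.le]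
      _ ≤ u ^ (-a) := rpow_le_rpow_of_nonpos hu0 hub (by linarith)
  rw [div_mul_eq_mul_div, div_le_iff₀ (by linarith)]
  nlinarith

lemma rpow_neg_le_mul_of_inv_mul_div_add_one_le {a K u y : ℝ} (ha0 : 0 ≤ a) (ha1 : a ≤ 1)
    (hK : 1 ≤ K) (hy : 0 < y) (hu : K⁻¹ * (y / (y + 1)) ≤ u) :
    u ^ (-a) ≤ K * (y ^ (-a) + 1) := by
  have hK0 : 0 < K := by linarith
  have hz : 0 < y / (y + 1) := by positivity
  calc u ^ (-a) ≤ (K⁻¹ * (y / (y + 1))) ^ (-a) :=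
        rpow_le_rpow_of_nonpos (by positivity) hu (by linarith)
    _ = K ^ a * (y / (y + 1)) ^ (-a) := by
        rw [mul_rpow (by positivity) hz.le, inv_rpow hK0.le, rpow_neg hK0.le, inv_inv]
    _ ≤ K * (y ^ (-a) + 1) :=
        mul_le_mul (rpow_le_self_of_one_le hK ha1) (rpow_neg_div_add_one_le ha0 ha1 hy)
          (by positivity) hK0.le

lemma inv_max_mul_div_add_one_le_one_sub_rpow_neg {β y : ℝ} (hβ : 0 < β) (hy : 0 < y) :
    (max 1 β⁻¹)⁻¹ * (y / (y + 1)) ≤ 1 - (y + 1) ^ (-β) := by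
  have hy1 : 0 < y + 1 := by linarith
  have hK : (max 1 β⁻¹)⁻¹ ≤ min 1 β :=
    le_min (inv_le_one_of_one_le₀ (le_max_left _ _))
      (by simpa using inv_anti₀ (inv_pos.2 hβ) (le_max_right 1 β⁻¹))
  have hlow := min_one_mul_one_sub_le_one_sub_rpow (inv_nonneg.2 hy1.le)
    (inv_le_one_of_one_le₀ (by linarith)) hβ.le
  have hw : 1 - (y + 1)⁻¹ = y / (y + 1) := by field_simp; ring
  rw [inv_rpow hy1.le, ← rpow_neg hy1.le, hw] at hlow
  exact (mul_le_mul_of_nonneg_right hK (by positivity)).trans hlow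

/-- With `c_α = (α/δ)^α`, `c₁ = c_α/(c_α+1)`, `c₂ = max 1 (α/δ)`:
`c₁·(y^(−α)+1) ≤ (1−(y+1)^(−δ/α))^(−α) ≤ c₂·(y^(−α)+1)` for `y > 0`. -/
theorem stmt1 (α : ℝ) (hα : 0 < α) (hα1 : α < 1) (y : ℝ) (hy : 0 < y) :
    ((α / (1 - α)) ^ α / ((α / (1 - α)) ^ α + 1)) * (y ^ (-α) + 1) ≤
        (1 - (y + 1) ^ (-((1 - α) / α))) ^ (-α) ∧
      (1 - (y + 1) ^ (-((1 - α) / α))) ^ (-α) ≤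
        max 1 (α / (1 - α)) * (y ^ (-α) + 1) := by
  set β := (1 - α) / α
  have hβ : 0 < β := div_pos (by linarith) hα
  have ht0 : 0 < (y + 1) ^ (-β) := by positivity
  have ht1 : (y + 1) ^ (-β) < 1 := rpow_lt_one_of_one_lt_of_neg (by linarith) (by linarith)
  rw [← inv_div (1 - α) α]
  constructor
  · exact div_add_one_mul_le_rpow_neg hα.le hβ hy (by linarith) (by linarith)
      (one_sub_rpow_neg_le_mul hβ.le (by linarith))
  · exact rpow_neg_le_mul_of_inv_mul_div_add_one_le hα.le hα1.le (le_max_left _ _) hy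
      (inv_max_mul_div_add_one_le_one_sub_rpow_neg hβ hy)
end

section
/- Let f : [0,∞) → (0,∞) be a log-concave probability density function with f(x) ≤ f(0) for all x ≥ 0. Then for all x ≥ 0, f(x) ≤ f(0)·min(1, e^(1−f(0)·x)). -/
/-!
If `f x > f 0 · e^(1 - f 0 · x)` then necessarily `f 0 · x > 1`, and log-concavity forces `f` to lie
above the exponential `t ↦ f 0 · e^(c t)` with `c = (1 - f 0 · x) / x` on all of `[0, x]`, since it
does so at both endpoints. Writing `s = f 0 · x - 1 > 0`, the mass of that exponential on `[0, x]`
is `(s + 1)(1 - e^(-s)) / s`, which exceeds `1` because `e^s > 1 + s`; this contradicts `∫ f = 1`.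
-/

open Real MeasureTheory Set intervalIntegral

theorem mul_exp_le_of_concaveOn_log {f : ℝ → ℝ} {s : Set ℝ}
    (hconc : ConcaveOn ℝ s fun x => log (f x)) (hpos : ∀ y ∈ s, 0 < f y)
    {a b c : ℝ} (ha : a ∈ s) (hb : b ∈ s) (hfb : f a * exp (c * (b - a)) ≤ f b)
    {t : ℝ} (ht : t ∈ Icc a b) : f a * exp (c * (t - a)) ≤ f t := by
  rcases ht.1.eq_or_lt with rfl | hat
  · simp
  rcases ht.2.eq_or_lt with rfl | htb
  · exact hfb
  have hfa := hpos a ha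
  have hlog_b : log (f a) + c * (b - a) ≤ log (f b) := by
    rwa [le_log_iff_exp_le (hpos b hb), exp_add, exp_log hfa]
  have hchord : (b - t) * log (f a) + (t - a) * log (f b) ≤ (b - a) * log (f t) := by
    have h := hconc.neg.secant_mono_aux1 ha hb hat htb
    simp only [Pi.neg_apply] at h
    linarith
  have hlog_t : log (f a) + c * (t - a) ≤ log (f t) := by
    refine le_of_mul_le_mul_left ?_ (sub_pos.2 (hat.trans htb))
    nlinarith [mul_le_mul_of_nonneg_left hlog_b (sub_pos.2 hat).le]
  rwa [le_log_iff_exp_le (hpos t (hconc.1.ordConnected.out ha hb ⟨hat.le, htb.le⟩)), exp_add,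
    exp_log hfa] at hlog_t

theorem integral_mul_exp_mul (M x : ℝ) {c : ℝ} (hc : c ≠ 0) :
    ∫ t in (0 : ℝ)..x, M * exp (c * t) = M * (exp (c * x) - 1) / c := by
  rw [intervalIntegral.integral_const_mul, integral_comp_mul_left exp hc, integral_exp, mul_zero, exp_zero, smul_eq_mul]
  field_simp

theorem add_one_mul_exp_neg_lt_one {s : ℝ} (hs : s ≠ 0) : (s + 1) * exp (-s) < 1 := by
  have h := mul_lt_mul_of_pos_right (add_one_lt_exp hs) (exp_pos (-s))
  rwa [← exp_add, add_neg_cancel, exp_zero] at h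

theorem one_lt_integral_mul_exp {M x : ℝ} (hM : 0 < M) (hMx : 1 < M * x) :
    1 < ∫ t in (0 : ℝ)..x, M * exp ((1 - M * x) / x * t) := by
  have hx : 0 < x := pos_of_mul_pos_right (one_pos.trans hMx) hM.le
  have hs : 0 < M * x - 1 := sub_pos.2 hMx
  have hcx : (1 - M * x) / x * x = -(M * x - 1) := by field_simp; ring
  rw [integral_mul_exp_mul _ _ (div_ne_zero (by linarith) hx.ne'), hcx,
    div_div_eq_mul_div, lt_div_iff_of_neg (by linarith)]
  nlinarith [add_one_mul_exp_neg_lt_one hs.ne']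

theorem intervalIntegral_le_setIntegral_Ici {f : ℝ → ℝ} {a b : ℝ} (hab : a ≤ b)
    (hf : IntegrableOn f (Ici a)) (hnonneg : ∀ x ≥ a, 0 ≤ f x) :
    ∫ t in a..b, f t ≤ ∫ t in Ici a, f t := by
  rw [integral_of_le hab]
  exact setIntegral_mono_set hf ((ae_restrict_mem measurableSet_Ici).mono hnonneg)
    (Ioc_subset_Icc_self.trans Icc_subset_Ici_self).eventuallyLE

/-- A log-concave probability density on `[0,∞)` with maximum at `0` satisfies
`f(x) ≤ f(0)·min(1, e^(1 − f(0)·x))` for all `x ≥ 0`. -/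
theorem stmt4 (f : ℝ → ℝ)
    (hpos : ∀ x ≥ (0 : ℝ), 0 < f x)
    (hconc : ConcaveOn ℝ (Set.Ici 0) (fun x => Real.log (f x)))
    (hmax : ∀ x ≥ (0 : ℝ), f x ≤ f 0)
    (hdens : ∫ x in Set.Ici (0 : ℝ), f x = 1) :
    ∀ x ≥ (0 : ℝ), f x ≤ f 0 * min 1 (Real.exp (1 - f 0 * x)) := by
  intro x hx
  have hM : 0 < f 0 := hpos 0 le_rfl
  rw [mul_min_of_nonneg _ _ hM.le, mul_one]
  refine le_min (hmax x hx) (not_lt.1 fun hlt => ?_)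
  have hMx : 1 < f 0 * x := by
    by_contra! h
    exact hlt.not_ge <|
      (hmax x hx).trans <| le_mul_of_one_le_right hM.le (one_le_exp (by linarith))
  have hx0 : 0 < x := pos_of_mul_pos_right (one_pos.trans hMx) hM.le
  have hf : IntegrableOn f (Ici 0) := .of_integral_ne_zero (by rw [hdens]; exact one_ne_zero)
  have hlow : ∀ t ∈ Icc 0 x, f 0 * exp ((1 - f 0 * x) / x * t) ≤ f t := fun t ht => by
    have hend : (1 - f 0 * x) / x * (x - 0) = 1 - f 0 * x := by
      rw [sub_zero, div_mul_cancel₀ _ hx0.ne']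
    simpa using
      mul_exp_le_of_concaveOn_log hconc hpos self_mem_Ici hx (by rw [hend]; exact hlt.le) ht
  have hmass : (1 : ℝ) < 1 := calc
    1 < ∫ t in (0 : ℝ)..x, f 0 * exp ((1 - f 0 * x) / x * t) := one_lt_integral_mul_exp hM hMx
    _ ≤ ∫ t in (0 : ℝ)..x, f t :=
      integral_mono_on hx ((by fun_prop : Continuous _).intervalIntegrable _ _)
        ((intervalIntegrable_iff_integrableOn_Icc_of_le hx).2 (hf.mono_set Icc_subset_Ici_self)) hlow
    _ ≤ ∫ t in Ici 0, f t := intervalIntegral_le_setIntegral_Ici hx hf fun t ht => (hpos t ht).le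
    _ = 1 := hdens
  exact lt_irrefl 1 hmass
end

section
/- Let f > 0 on an interval I with 0 < ∫_I f < ∞, and let g be a strictly increasing differentiable convex function on an interval J with g(J) = I. For any interior point x of J: ∫_{J∩(−∞,x]} f(g(u)) du / ∫_{I∩(−∞,g(x)]} f ≥ 1/g'(x) ≥ ∫_{J∩[x,∞)} f(g(u)) du / ∫_{I∩[g(x),∞)} f. -/
open Real MeasureTheory Set

/-!
On `J ∩ (-∞, x]` convexity gives `g' ≤ g' x`, and on `J ∩ [x, ∞)` it gives `g' x ≤ g'`.
Substituting `y = g u` in `∫ f` over `I ∩ (-∞, g x]` and `I ∩ [g x, ∞)` therefore bounds these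
integrals by `g' x` times the corresponding integrals of `f ∘ g`, from above and from below;
dividing by `g' x > 0` and by the (positive) integrals of `f` gives both inequalities.
-/

lemma StrictMonoOn.image_inter_Iic {J : Set ℝ} {g : ℝ → ℝ} (hg : StrictMonoOn g J) {x : ℝ}
    (hx : x ∈ J) : g '' (J ∩ Iic x) = g '' J ∩ Iic (g x) := by
  ext y
  constructor
  · rintro ⟨u, ⟨huJ, hux⟩, rfl⟩
    exact ⟨mem_image_of_mem g huJ, (hg.le_iff_le huJ hx).2 hux⟩
  · rintro ⟨⟨u, huJ, rfl⟩, hux⟩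
    exact ⟨u, ⟨huJ, (hg.le_iff_le huJ hx).1 hux⟩, rfl⟩

lemma StrictMonoOn.image_inter_Ici {J : Set ℝ} {g : ℝ → ℝ} (hg : StrictMonoOn g J) {x : ℝ}
    (hx : x ∈ J) : g '' (J ∩ Ici x) = g '' J ∩ Ici (g x) := by
  ext y
  constructor
  · rintro ⟨u, ⟨huJ, hxu⟩, rfl⟩
    exact ⟨mem_image_of_mem g huJ, (hg.le_iff_le hx huJ).2 hxu⟩
  · rintro ⟨⟨u, huJ, rfl⟩, hxu⟩
    exact ⟨u, ⟨huJ, (hg.le_iff_le hx huJ).1 hxu⟩, rfl⟩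

lemma StrictMonoOn.pos_of_hasDerivAt_of_convexOn {J : Set ℝ} {g : ℝ → ℝ} {a x d : ℝ}
    (hg : StrictMonoOn g J) (hgconv : ConvexOn ℝ J g) (ha : a ∈ J) (hx : x ∈ J) (hax : a < x)
    (hd : HasDerivAt g d x) : 0 < d := by
  refine lt_of_lt_of_le ?_ (hgconv.slope_le_of_hasDerivAt ha hx hax hd)
  rw [slope_def_field]
  exact div_pos (sub_pos.2 (hg ha hx hax)) (sub_pos.2 hax)

lemma ConvexOn.monotoneOn_of_hasDerivAt {J : Set ℝ} {g g' : ℝ → ℝ} (hgconv : ConvexOn ℝ J g)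
    (hgd : ∀ u ∈ J, HasDerivAt g (g' u) u) : MonotoneOn g' J := fun u hu v hv huv ↦ by
  simpa only [(hgd u hu).deriv, (hgd v hv).deriv] using
    hgconv.monotoneOn_deriv (fun w hw ↦ (hgd w hw).differentiableAt) hu hv huv

section Positivity

variable {I : Set ℝ} {f : ℝ → ℝ} {a b : ℝ}

lemma setIntegral_pos_of_Ioo_subset {s : Set ℝ} (hs : MeasurableSet s) (hf : ∀ y ∈ s, 0 < f y)
    (hfs : IntegrableOn f s) (hab : a < b) (hsub : Ioo a b ⊆ s) : 0 < ∫ y in s, f y := by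
  rw [setIntegral_pos_iff_support_of_nonneg_ae (ae_restrict_of_forall_mem hs fun y hy ↦
    (hf y hy).le) hfs]
  calc (0 : ENNReal) < volume (Ioo a b) := by simp [hab]
    _ ≤ volume (Function.support f ∩ s) :=
      measure_mono fun y hy ↦ ⟨(hf y (hsub hy)).ne', hsub hy⟩

lemma Set.OrdConnected.setIntegral_inter_Iic_pos (hI : I.OrdConnected) (hf : ∀ y ∈ I, 0 < f y)
    (hfI : IntegrableOn f I) (ha : a ∈ I) (hb : b ∈ I) (hab : a < b) :
    0 < ∫ y in I ∩ Iic b, f y :=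
  setIntegral_pos_of_Ioo_subset (hI.measurableSet.inter measurableSet_Iic)
    (fun y hy ↦ hf y hy.1) (hfI.mono_set inter_subset_left) hab
    fun _ hy ↦ ⟨hI.out ha hb (Ioo_subset_Icc_self hy), hy.2.le⟩

lemma Set.OrdConnected.setIntegral_inter_Ici_pos (hI : I.OrdConnected) (hf : ∀ y ∈ I, 0 < f y)
    (hfI : IntegrableOn f I) (ha : a ∈ I) (hb : b ∈ I) (hab : a < b) :
    0 < ∫ y in I ∩ Ici a, f y :=
  setIntegral_pos_of_Ioo_subset (hI.measurableSet.inter measurableSet_Ici)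
    (fun y hy ↦ hf y hy.1) (hfI.mono_set inter_subset_left) hab
    fun _ hy ↦ ⟨hI.out ha hb (Ioo_subset_Icc_self hy), hy.1.le⟩

end Positivity

section ChangeOfVariables

variable {s : Set ℝ} {f g g' : ℝ → ℝ} {c : ℝ}

lemma setIntegral_image_le_mul_of_deriv_le (hs : MeasurableSet s)
    (hg' : ∀ u ∈ s, HasDerivWithinAt g (g' u) s u) (hg : MonotoneOn g s)
    (hf : ∀ u ∈ s, 0 ≤ f (g u)) (hfint : IntegrableOn f (g '' s))
    (hfg : IntegrableOn (fun u ↦ f (g u)) s) (hc : ∀ u ∈ s, g' u ≤ c) :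
    ∫ y in g '' s, f y ≤ c * ∫ u in s, f (g u) := by
  rw [integral_image_eq_integral_deriv_smul_of_monotoneOn hs hg' hg, ← integral_const_mul]
  exact setIntegral_mono_on
    ((integrableOn_image_iff_integrableOn_deriv_smul_of_monotoneOn hs hg' hg f).1 hfint)
    (hfg.const_mul c) hs fun u hu ↦ mul_le_mul_of_nonneg_right (hc u hu) (hf u hu)

lemma mul_setIntegral_le_setIntegral_image_of_le_deriv (hs : MeasurableSet s)
    (hg' : ∀ u ∈ s, HasDerivWithinAt g (g' u) s u) (hg : MonotoneOn g s)
    (hf : ∀ u ∈ s, 0 ≤ f (g u)) (hfint : IntegrableOn f (g '' s))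
    (hfg : IntegrableOn (fun u ↦ f (g u)) s) (hc : ∀ u ∈ s, c ≤ g' u) :
    c * ∫ u in s, f (g u) ≤ ∫ y in g '' s, f y := by
  rw [integral_image_eq_integral_deriv_smul_of_monotoneOn hs hg' hg, ← integral_const_mul]
  exact setIntegral_mono_on (hfg.const_mul c)
    ((integrableOn_image_iff_integrableOn_deriv_smul_of_monotoneOn hs hg' hg f).1 hfint)
    hs fun u hu ↦ mul_le_mul_of_nonneg_right (hc u hu) (hf u hu)

variable {J : Set ℝ} {x : ℝ} (hJ : J.OrdConnected) (hg : StrictMonoOn g J)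
  (hgd : ∀ u ∈ J, HasDerivAt g (g' u) u) (hgconv : ConvexOn ℝ J g)
  (hf : ∀ u ∈ J, 0 ≤ f (g u)) (hfint : IntegrableOn f (g '' J))
  (hfg : IntegrableOn (fun u ↦ f (g u)) J) (hx : x ∈ J)
include hJ hg hgd hgconv hf hfint hfg hx

lemma ConvexOn.setIntegral_image_inter_Iic_le :
    ∫ y in g '' J ∩ Iic (g x), f y ≤ g' x * ∫ u in J ∩ Iic x, f (g u) := by
  rw [← hg.image_inter_Iic hx]
  refine setIntegral_image_le_mul_of_deriv_le (hJ.measurableSet.inter measurableSet_Iic)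
    (fun u hu ↦ (hgd u hu.1).hasDerivWithinAt) (hg.monotoneOn.mono inter_subset_left)
    (fun u hu ↦ hf u hu.1) ?_ (hfg.mono_set inter_subset_left)
    fun u hu ↦ hgconv.monotoneOn_of_hasDerivAt hgd hu.1 hx hu.2
  rw [hg.image_inter_Iic hx]
  exact hfint.mono_set inter_subset_left

lemma ConvexOn.le_setIntegral_image_inter_Ici :
    g' x * ∫ u in J ∩ Ici x, f (g u) ≤ ∫ y in g '' J ∩ Ici (g x), f y := by
  rw [← hg.image_inter_Ici hx]
  refine mul_setIntegral_le_setIntegral_image_of_le_deriv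
    (hJ.measurableSet.inter measurableSet_Ici)
    (fun u hu ↦ (hgd u hu.1).hasDerivWithinAt) (hg.monotoneOn.mono inter_subset_left)
    (fun u hu ↦ hf u hu.1) ?_ (hfg.mono_set inter_subset_left)
    fun u hu ↦ hgconv.monotoneOn_of_hasDerivAt hgd hx hu.1 hu.2
  rw [hg.image_inter_Ici hx]
  exact hfint.mono_set inter_subset_left

end ChangeOfVariables

theorem stmt7_general (I J : Set ℝ) (hI : I.OrdConnected) (hJ : J.OrdConnected)
    (f : ℝ → ℝ) (hfpos : ∀ y ∈ I, 0 < f y)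
    (hfint : MeasureTheory.IntegrableOn f I)
    (g g' : ℝ → ℝ) (hg : StrictMonoOn g J)
    (hgd : ∀ x ∈ J, HasDerivAt g (g' x) x)
    (hgconv : ConvexOn ℝ J g) (hgJ : g '' J = I)
    (hfgint : MeasureTheory.IntegrableOn (fun u => f (g u)) J)
    (x : ℝ) (hx : x ∈ interior J) :
    1 / g' x ≤ (∫ u in J ∩ Set.Iic x, f (g u)) / (∫ y in I ∩ Set.Iic (g x), f y) ∧
      (∫ u in J ∩ Set.Ici x, f (g u)) / (∫ y in I ∩ Set.Ici (g x), f y) ≤ 1 / g' x := by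
  have hxJ : x ∈ J := interior_subset hx
  obtain ⟨l, r, ⟨hlx, hxr⟩, hlrJ⟩ :=
    mem_nhds_iff_exists_Ioo_subset.1 (mem_interior_iff_mem_nhds.1 hx)
  obtain ⟨a, hla, hax⟩ := exists_between hlx
  obtain ⟨b, hxb, hbr⟩ := exists_between hxr
  have haJ : a ∈ J := hlrJ ⟨hla, hax.trans hxr⟩
  have hbJ : b ∈ J := hlrJ ⟨hlx.trans hxb, hbr⟩
  have hgI : ∀ u ∈ J, g u ∈ I := fun u hu ↦ hgJ ▸ mem_image_of_mem g hu
  have hfg : ∀ u ∈ J, 0 ≤ f (g u) := fun u hu ↦ (hfpos _ (hgI u hu)).le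
  have hg'x : 0 < g' x := hg.pos_of_hasDerivAt_of_convexOn hgconv haJ hxJ hax (hgd x hxJ)
  have hle := hgconv.setIntegral_image_inter_Iic_le hJ hg hgd hfg (hgJ ▸ hfint) hfgint hxJ
  have hge := hgconv.le_setIntegral_image_inter_Ici hJ hg hgd hfg (hgJ ▸ hfint) hfgint hxJ
  rw [hgJ] at hle hge
  have hpos_Iic := hI.setIntegral_inter_Iic_pos hfpos hfint (hgI a haJ) (hgI x hxJ)
    (hg haJ hxJ hax)
  have hpos_Ici := hI.setIntegral_inter_Ici_pos hfpos hfint (hgI x hxJ) (hgI b hbJ)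
    (hg hxJ hbJ hxb)
  constructor
  · rw [div_le_div_iff₀ hg'x hpos_Iic]
    linarith
  · rw [div_le_div_iff₀ hpos_Ici hg'x]
    linarith

/-- Change-of-variables inequality: with `f > 0` integrable on interval `I`,
`g : J → I` strictly increasing, differentiable, convex, and `x` interior to `J`,
`∫_{J∩(−∞,x]} f∘g / ∫_{I∩(−∞,g(x)]} f ≥ 1/g'(x) ≥ ∫_{J∩[x,∞)} f∘g / ∫_{I∩[g(x),∞)} f`. -/
theorem stmt7 (I J : Set ℝ) (hI : I.OrdConnected) (hJ : J.OrdConnected)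
    (f : ℝ → ℝ) (hfpos : ∀ y ∈ I, 0 < f y)
    (hfint : MeasureTheory.IntegrableOn f I)
    (hfIpos : 0 < ∫ y in I, f y)
    (g g' : ℝ → ℝ) (hg : StrictMonoOn g J)
    (hgd : ∀ x ∈ J, HasDerivAt g (g' x) x)
    (hgconv : ConvexOn ℝ J g) (hgJ : g '' J = I)
    (hfgint : MeasureTheory.IntegrableOn (fun u => f (g u)) J)
    (x : ℝ) (hx : x ∈ interior J) :
    1 / g' x ≤ (∫ u in J ∩ Set.Iic x, f (g u)) / (∫ y in I ∩ Set.Iic (g x), f y) ∧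
      (∫ u in J ∩ Set.Ici x, f (g u)) / (∫ y in I ∩ Set.Ici (g x), f y) ≤ 1 / g' x :=
  stmt7_general I J hI hJ f hfpos hfint g g' hg hgd hgconv hgJ hfgint x hx
end

section
/- For c ∈ [1,2) and 0 ≤ d < b, one has d^(c−1)e^(−d) − b^(c−1)e^(−b) ≤ ∫_d^b x^(c−1)e^(−x) dx ≤ 2·[d^(c−1)e^(−d) − b^(c−1)e^(−b)], provided d ≥ c − 1 + 1 (e.g., d ≥ 2). -/
/-!
Since `(x ^ a - a * x ^ (a - 1)) * exp (-x)` is the derivative of `-(x ^ a * exp (-x))`, the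
difference `d ^ a * exp (-d) - b ^ a * exp (-b)` is its integral over `[d, b]`. Pointwise this
integrand lies between `x ^ a * exp (-x)` and half of it: the lower comparison needs `0 ≤ a`,
the upper one `2 * a ≤ x`. Integrating gives both bounds, with `a = c - 1`.
-/

open Real Set

namespace Real

theorem hasDerivAt_neg_rpow_mul_exp_neg (a : ℝ) {x : ℝ} (hx : 0 < x) :
    HasDerivAt (fun y => -(y ^ a * exp (-y))) ((x ^ a - a * x ^ (a - 1)) * exp (-x)) x := by
  have hexp : HasDerivAt (fun y : ℝ => exp (-y)) (-exp (-x)) x := by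
    simpa using (hasDerivAt_neg x).exp
  have hpow : HasDerivAt (fun y : ℝ => y ^ a) (a * x ^ (a - 1)) x :=
    hasDerivAt_rpow_const (Or.inl hx.ne')
  exact (hpow.mul hexp).neg.congr_deriv (by ring)

theorem integral_rpow_sub_mul_rpow_mul_exp_neg {a d b : ℝ} (hd : 0 < d) (hdb : d ≤ b) :
    ∫ x in d..b, (x ^ a - a * x ^ (a - 1)) * exp (-x) =
      d ^ a * exp (-d) - b ^ a * exp (-b) := by
  have hpos : ∀ x ∈ uIcc d b, 0 < x := fun x hx => by
    rw [uIcc_of_le hdb] at hx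
    exact hd.trans_le hx.1
  have hne : ∀ x ∈ uIcc d b, x ≠ 0 := fun x hx => (hpos x hx).ne'
  have hcont : ContinuousOn (fun x : ℝ => (x ^ a - a * x ^ (a - 1)) * exp (-x)) (uIcc d b) := by
    fun_prop (disch := assumption)
  rw [intervalIntegral.integral_eq_sub_of_hasDerivAt
    (fun x hx => hasDerivAt_neg_rpow_mul_exp_neg a (hpos x hx)) hcont.intervalIntegrable]
  ring

theorem rpow_sub_mul_rpow_mul_exp_neg_le {a x : ℝ} (ha : 0 ≤ a) (hx : 0 < x) :
    (x ^ a - a * x ^ (a - 1)) * exp (-x) ≤ x ^ a * exp (-x) := by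
  have : 0 ≤ a * x ^ (a - 1) := mul_nonneg ha (rpow_nonneg hx.le _)
  gcongr
  linarith

theorem rpow_mul_exp_neg_le_two_mul {a x : ℝ} (hx : 0 < x) (hax : 2 * a ≤ x) :
    x ^ a * exp (-x) ≤ 2 * ((x ^ a - a * x ^ (a - 1)) * exp (-x)) := by
  have hsplit : x ^ a = x ^ (a - 1) * x := by
    rw [← rpow_add_one hx.ne']
    ring_nf
  have key : 2 * a * x ^ (a - 1) ≤ x ^ a := by
    rw [hsplit, mul_comm (x ^ (a - 1))]
    exact mul_le_mul_of_nonneg_right hax (rpow_nonneg hx.le _)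
  rw [← mul_assoc]
  gcongr
  linarith

theorem integral_rpow_mul_exp_neg_bounds {a d b : ℝ} (ha : 0 ≤ a) (hd : 0 < d)
    (had : 2 * a ≤ d) (hdb : d ≤ b) :
    d ^ a * exp (-d) - b ^ a * exp (-b) ≤ (∫ x in d..b, x ^ a * exp (-x)) ∧
      (∫ x in d..b, x ^ a * exp (-x)) ≤ 2 * (d ^ a * exp (-d) - b ^ a * exp (-b)) := by
  have hne : ∀ x ∈ uIcc d b, x ≠ 0 := fun x hx => by
    rw [uIcc_of_le hdb] at hx
    exact (hd.trans_le hx.1).ne'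
  have hf : IntervalIntegrable (fun x : ℝ => (x ^ a - a * x ^ (a - 1)) * exp (-x)) MeasureTheory.volume d b :=
    ContinuousOn.intervalIntegrable (by fun_prop (disch := assumption))
  have hg : IntervalIntegrable (fun x : ℝ => x ^ a * exp (-x)) MeasureTheory.volume d b :=
    ContinuousOn.intervalIntegrable (by fun_prop (disch := assumption))
  rw [← integral_rpow_sub_mul_rpow_mul_exp_neg hd hdb, ← intervalIntegral.integral_const_mul]
  constructor
  · exact intervalIntegral.integral_mono_on hdb hf hg fun x hx =>
      rpow_sub_mul_rpow_mul_exp_neg_le ha (hd.trans_le hx.1)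
  · exact intervalIntegral.integral_mono_on hdb hg (hf.const_mul 2) fun x hx =>
      rpow_mul_exp_neg_le_two_mul (hd.trans_le hx.1) (had.trans hx.1)

end Real

/-- For `c ∈ [1,2)` and `d ≥ c − 1 + 1`, `d < b`:
`d^(c−1)e^(−d) − b^(c−1)e^(−b) ≤ ∫_d^b x^(c−1)e^(−x) dx
  ≤ 2·(d^(c−1)e^(−d) − b^(c−1)e^(−b))`. -/
theorem stmt9 (c d b : ℝ) (hc1 : 1 ≤ c) (hc2 : c < 2)
    (hd : c - 1 + 1 ≤ d) (hdb : d < b) :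
    d ^ (c - 1) * Real.exp (-d) - b ^ (c - 1) * Real.exp (-b) ≤
        (∫ x in d..b, x ^ (c - 1) * Real.exp (-x)) ∧
      (∫ x in d..b, x ^ (c - 1) * Real.exp (-x)) ≤
        2 * (d ^ (c - 1) * Real.exp (-d) - b ^ (c - 1) * Real.exp (-b)) :=
  integral_rpow_mul_exp_neg_bounds (by linarith) (by linarith) (by linarith) hdb.le
end

section
/- For every integer n ≥ 7 and 0 < x ≤ 4: (e^x − Σ_{k=0}^{n} x^k/k!)/(x^(n+1)/(n+1)!) ≤ 2(n+1)/(n+2). -/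
/-!
Write `A = x^(n+1)/(n+1)!`. The remainder `e^x - ∑_{k ≤ n} x^k/k!` is `A` plus the tail starting
at `x^(n+2)/(n+2)! = A x/(n+2)`, and since `x^(m+k)/(m+k)! ≤ x^m/m! · (x/(m+1))^k` that tail is at most
a geometric series with ratio `x/(n+3)`. Hence the normalised remainder is at most
`1 + x(n+3)/((n+2)(n+3-x))`, which is `≤ 2(n+1)/(n+2)` exactly when `x(2n+3) ≤ n(n+3)`;
for `x ≤ 4` this holds once `n ≥ 7`.
-/

open Real Finset Nat

lemma exp_sub_sum_range_eq_tsum (x : ℝ) (n : ℕ) :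
    exp x - ∑ k ∈ range n, x ^ k / k ! = ∑' k, x ^ (k + n) / (k + n)! := by
  have h : HasSum (fun k ↦ x ^ k / (k ! : ℝ)) (exp x) := by
    rw [exp_eq_exp_ℝ]
    exact NormedSpace.expSeries_div_hasSum_exp x
  rw [← h.tsum_eq, ← h.summable.sum_add_tsum_nat_add n, add_sub_cancel_left]

lemma tsum_pow_div_factorial_add_le {x : ℝ} (m : ℕ) (hx0 : 0 ≤ x) (hx : x < m + 1) :
    ∑' k, x ^ (k + m) / (k + m)! ≤ x ^ m / m ! * ((m + 1) / (m + 1 - x)) := by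
  have hq0 : 0 ≤ x / (m + 1) := by positivity
  have hq1 : x / (m + 1) < 1 := (div_lt_one (by positivity)).2 hx
  have hterm (k : ℕ) : x ^ (k + m) / (k + m)! ≤ x ^ m / m ! * (x / (m + 1)) ^ k := by
    have hfact : (m ! * (m + 1) ^ k : ℝ) ≤ (k + m)! := by
      rw [add_comm k m]
      exact_mod_cast factorial_mul_pow_le_factorial
    rw [div_pow, _root_.div_mul_div_comm, pow_add, mul_comm (x ^ k)]
    exact div_le_div_of_nonneg_left (by positivity) (by positivity) hfact
  calc ∑' k, x ^ (k + m) / (k + m)!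
      ≤ ∑' k, x ^ m / m ! * (x / (m + 1)) ^ k :=
        ((summable_nat_add_iff m).2 (summable_pow_div_factorial x)).tsum_le_tsum hterm
          ((summable_geometric_of_lt_one hq0 hq1).mul_left _)
    _ = x ^ m / m ! * ((m + 1) / (m + 1 - x)) := by
        rw [tsum_mul_left, tsum_geometric_of_lt_one hq0 hq1, one_sub_div (by positivity),
          inv_div]

lemma exp_sub_sum_range_succ_le {x : ℝ} (n : ℕ) (hx0 : 0 ≤ x) (hx : x < n + 3) :
    exp x - ∑ k ∈ range (n + 1), x ^ k / k ! ≤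
      x ^ (n + 1) / (n + 1)! * (1 + x / (n + 2) * ((n + 3) / (n + 3 - x))) := by
  have hsplit : exp x - ∑ k ∈ range (n + 1), x ^ k / k ! =
      x ^ (n + 1) / (n + 1)! + ∑' k, x ^ (k + (n + 2)) / (k + (n + 2))! := by
    rw [← exp_sub_sum_range_eq_tsum]
    linarith [sum_range_succ (fun k ↦ x ^ k / (k ! : ℝ)) (n + 1)]
  have hnext : x ^ (n + 2) / (n + 2)! = x ^ (n + 1) / (n + 1)! * (x / (n + 2)) := by
    rw [factorial_succ (n + 1), pow_succ, _root_.div_mul_div_comm]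
    push_cast
    ring
  have htail := tsum_pow_div_factorial_add_le (n + 2) hx0 (by push_cast; linarith)
  rw [hnext] at htail
  push_cast at htail
  rw [show (n : ℝ) + 2 + 1 = n + 3 by ring] at htail
  rw [hsplit]
  linarith

lemma one_add_div_mul_div_le {n x : ℝ} (hx0 : 0 ≤ x) (hx : x < n + 3)
    (hxn : x * (2 * n + 3) ≤ n * (n + 3)) :
    1 + x / (n + 2) * ((n + 3) / (n + 3 - x)) ≤ 2 * (n + 1) / (n + 2) := by
  have hn : 0 < n + 2 := by nlinarith
  have hd : 0 < n + 3 - x := by linarith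
  rw [← sub_nonneg]
  have h : 2 * (n + 1) / (n + 2) - (1 + x / (n + 2) * ((n + 3) / (n + 3 - x))) =
      (n * (n + 3) - x * (2 * n + 3)) / ((n + 2) * (n + 3 - x)) := by
    field_simp
    ring
  rw [h]
  exact div_nonneg (by linarith) (by positivity)

/-- For every integer `n ≥ 7` and `0 < x ≤ 4`:
`(e^x − Σ_{k=0}^n x^k/k!)/(x^(n+1)/(n+1)!) ≤ 2(n+1)/(n+2)`. -/
theorem stmt11 (n : ℕ) (hn : 7 ≤ n) (x : ℝ) (hx0 : 0 < x) (hx4 : x ≤ 4) :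
    (Real.exp x - ∑ k ∈ Finset.range (n + 1), x ^ k / (Nat.factorial k : ℝ)) /
        (x ^ (n + 1) / (Nat.factorial (n + 1) : ℝ)) ≤
      2 * ((n : ℝ) + 1) / ((n : ℝ) + 2) := by
  have hn' : (7 : ℝ) ≤ n := by exact_mod_cast hn
  have hx : x < n + 3 := by linarith
  have hxn : x * (2 * n + 3) ≤ n * (n + 3) := by nlinarith
  rw [div_le_iff₀ (by positivity), mul_comm _ (x ^ (n + 1) / _)]
  calc _ ≤ x ^ (n + 1) / (n + 1)! * (1 + x / (n + 2) * ((n + 3) / (n + 3 - x))) :=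
        exp_sub_sum_range_succ_le n hx0.le hx
    _ ≤ _ := by
        gcongr
        exact one_add_div_mul_div_le hx0.le hx hxn
end

section
/- Let c ∈ (0,1), 0 ≤ a < b, and define D(a,b,c) = 2[b^(c−1)(e^b − 1 − b) − a^(c−1)(e^a − 1 − a)] and M(a,b,c) = (b^c − a^c)/c + D(a,b,c). Then (b^c − a^c)/c + D(a,b,c)/2 ≤ ∫_a^b x^(c−1)e^x dx ≤ M(a,b,c); in particular ∫_a^b x^(c−1)e^x dx > M(a,b,c)/2. -/
/-!
Write `x^(c-1) e^x = x^(c-1) + x^(c-1)(e^x - 1)`; the first term integrates to `(b^c - a^c)/c`.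
The second is compared with the derivative of `F x = x^(c-1)(e^x - 1 - x)`,
`F' x = (c-1) x^(c-2)(e^x - 1 - x) + x^(c-1)(e^x - 1)`. Since `c - 1 ≤ 0` we get `F' ≤ x^(c-1)(e^x - 1)`,
and since `c - 1 ≥ -1` together with `2(e^x - 1 - x) ≤ x(e^x - 1)` we get `x^(c-1)(e^x - 1) ≤ 2F'`.
Integrating gives `D/2 ≤ ∫ x^(c-1)(e^x - 1) ≤ D`, and `(b^c - a^c)/c > 0` yields the strict bound.
-/

open Real Set MeasureTheory intervalIntegral Filter Topology

namespace Real

lemma one_sub_mul_exp_le_one (x : ℝ) : (1 - x) * exp x ≤ 1 := by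
  have h := mul_le_mul_of_nonneg_right (one_sub_le_exp_neg x) (exp_pos x).le
  rwa [← exp_add, neg_add_cancel, exp_zero] at h

lemma two_mul_exp_sub_one_sub_le {x : ℝ} (hx : 0 ≤ x) :
    2 * (exp x - 1 - x) ≤ x * (exp x - 1) := by
  let h : ℝ → ℝ := fun t => t * (exp t - 1) - 2 * (exp t - 1 - t)
  have h_deriv : ∀ t, HasDerivAt h ((t - 1) * exp t + 1) t := by
    intro t
    exact (((hasDerivAt_id' t).mul ((hasDerivAt_exp t).sub_const 1)).sub
      ((((hasDerivAt_exp t).sub_const 1).sub (hasDerivAt_id' t)).const_mul 2)).congr_deriv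
        (by ring)
  have h_mono : Monotone h := monotone_of_deriv_nonneg (fun t => (h_deriv t).differentiableAt)
    fun t => by rw [(h_deriv t).deriv]; linarith [one_sub_mul_exp_le_one t]
  simpa [h] using h_mono hx

lemma abs_rpow_mul_exp_sub_one_sub_le {r x : ℝ} (hr : -2 < r) (hx0 : 0 ≤ x) (hx1 : x ≤ 1) :
    |x ^ r * (exp x - 1 - x)| ≤ x ^ (r + 2) := by
  rw [abs_mul, abs_of_nonneg (rpow_nonneg hx0 r), rpow_add' hx0 (by linarith), rpow_two]
  exact mul_le_mul_of_nonneg_left (abs_exp_sub_one_sub_id_le (abs_le.2 ⟨by linarith, hx1⟩))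
    (rpow_nonneg hx0 r)

lemma continuousOn_rpow_mul_exp_sub_one_sub {r : ℝ} (hr : -2 < r) :
    ContinuousOn (fun x => x ^ r * (exp x - 1 - x)) (Ici 0) := by
  intro x hx
  rcases (mem_Ici.1 hx).eq_or_lt with rfl | hx0
  · have h_lim : Tendsto (fun x : ℝ => x ^ (r + 2)) (𝓝[Ici 0] 0) (𝓝 0) := by
      have := (continuousAt_rpow_const 0 (r + 2) (Or.inr (by linarith))).tendsto
      rw [zero_rpow (by linarith)] at this
      exact this.mono_left nhdsWithin_le_nhds
    have h_bound : ∀ᶠ x in 𝓝[Ici 0] 0, ‖x ^ r * (exp x - 1 - x)‖ ≤ x ^ (r + 2) := by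
      filter_upwards [self_mem_nhdsWithin, nhdsWithin_le_nhds (Iio_mem_nhds one_pos)]
        with x hx0 hx1
      exact abs_rpow_mul_exp_sub_one_sub_le hr hx0 (le_of_lt hx1)
    simpa [ContinuousWithinAt] using squeeze_zero_norm' h_bound h_lim
  · exact ((continuousAt_rpow_const x r (Or.inl hx0.ne')).mul
      (by fun_prop : Continuous fun x => exp x - 1 - x).continuousAt).continuousWithinAt

lemma hasDerivAt_rpow_mul_exp_sub_one_sub {r x : ℝ} (hx : 0 < x) :
    HasDerivAt (fun x => x ^ r * (exp x - 1 - x))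
      (r * x ^ (r - 1) * (exp x - 1 - x) + x ^ r * (exp x - 1)) x :=
  (hasDerivAt_rpow_const (Or.inl hx.ne')).mul
    (((hasDerivAt_exp x).sub_const 1).sub (hasDerivAt_id' x))

end Real

section

variable {a b r : ℝ}

lemma intervalIntegrable_rpow_mul_exp_sub_one (hr : -1 < r) :
    IntervalIntegrable (fun x => x ^ r * (exp x - 1)) volume a b :=
  (intervalIntegrable_rpow' hr).mul_continuousOn (by fun_prop)

lemma integral_rpow_mul_exp (hr : -1 < r) :
    ∫ x in a..b, x ^ r * exp x =
      (b ^ (r + 1) - a ^ (r + 1)) / (r + 1) + ∫ x in a..b, x ^ r * (exp x - 1) := by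
  rw [← integral_rpow (Or.inl hr),
    ← integral_add (intervalIntegrable_rpow' hr) (intervalIntegrable_rpow_mul_exp_sub_one hr)]
  congr 1 with x
  ring

lemma sub_le_integral_rpow_mul_exp_sub_one (ha : 0 ≤ a) (hab : a ≤ b) (hr : -1 < r)
    (hr0 : r ≤ 0) :
    b ^ r * (exp b - 1 - b) - a ^ r * (exp a - 1 - a) ≤ ∫ x in a..b, x ^ r * (exp x - 1) := by
  refine sub_le_integral_of_hasDeriv_right_of_le hab
    ((continuousOn_rpow_mul_exp_sub_one_sub (by linarith)).mono fun x hx => ha.trans hx.1)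
    (fun x hx => (hasDerivAt_rpow_mul_exp_sub_one_sub (ha.trans_lt hx.1)).hasDerivWithinAt)
    ((intervalIntegrable_iff_integrableOn_Icc_of_le hab).1
      (intervalIntegrable_rpow_mul_exp_sub_one hr)) fun x hx => ?_
  have hx0 : 0 < x := ha.trans_lt hx.1
  have : r * x ^ (r - 1) * (exp x - 1 - x) ≤ 0 :=
    mul_nonpos_of_nonpos_of_nonneg (mul_nonpos_of_nonpos_of_nonneg hr0 (rpow_nonneg hx0.le _))
      (by linarith [add_one_le_exp x])
  linarith

lemma integral_rpow_mul_exp_sub_one_le (ha : 0 ≤ a) (hab : a ≤ b) (hr : -1 < r) :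
    ∫ x in a..b, x ^ r * (exp x - 1) ≤
      2 * (b ^ r * (exp b - 1 - b) - a ^ r * (exp a - 1 - a)) := by
  refine (integral_le_sub_of_hasDeriv_right_of_le
    (g := fun x => 2 * (x ^ r * (exp x - 1 - x))) hab (continuousOn_const.mul ((continuousOn_rpow_mul_exp_sub_one_sub (by linarith)).mono
      fun x hx => ha.trans hx.1))
    (fun x hx => ((hasDerivAt_rpow_mul_exp_sub_one_sub (ha.trans_lt hx.1)).const_mul
      2).hasDerivWithinAt)
    ((intervalIntegrable_iff_integrableOn_Icc_of_le hab).1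
      (intervalIntegrable_rpow_mul_exp_sub_one hr)) fun x hx => ?_).trans_eq (by ring)
  have hx0 : 0 < x := ha.trans_lt hx.1
  -- `x^r = x^(r-1) * x`, so the claim is `x^(r-1) * (2r(e^x - 1 - x) + x(e^x - 1)) ≥ 0`.
  rw [show x ^ r = x ^ (r - 1) * x by rw [← rpow_add_one hx0.ne', sub_add_cancel]]
  have h_key : 0 ≤ 2 * r * (exp x - 1 - x) + x * (exp x - 1) := by
    nlinarith [two_mul_exp_sub_one_sub_le hx0.le, add_one_le_exp x]
  nlinarith [mul_nonneg (rpow_nonneg hx0.le (r - 1)) h_key]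

end

/-- With `D(a,b,c) = 2[b^(c−1)(e^b−1−b) − a^(c−1)(e^a−1−a)]` and
`M(a,b,c) = (b^c − a^c)/c + D(a,b,c)`:
`(b^c−a^c)/c + D/2 ≤ ∫_a^b x^(c−1)e^x dx ≤ M`, in particular the integral `> M/2`. -/
theorem stmt16 (a b c : ℝ) (ha : 0 ≤ a) (hab : a < b) (hc : c ∈ Set.Ioo (0 : ℝ) 1) :
    (b ^ c - a ^ c) / c +
        (2 * (b ^ (c - 1) * (Real.exp b - 1 - b) - a ^ (c - 1) * (Real.exp a - 1 - a))) / 2 ≤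
        (∫ x in a..b, x ^ (c - 1) * Real.exp x) ∧
      (∫ x in a..b, x ^ (c - 1) * Real.exp x) ≤
        (b ^ c - a ^ c) / c +
          2 * (b ^ (c - 1) * (Real.exp b - 1 - b) - a ^ (c - 1) * (Real.exp a - 1 - a)) ∧
      ((b ^ c - a ^ c) / c +
          2 * (b ^ (c - 1) * (Real.exp b - 1 - b) - a ^ (c - 1) * (Real.exp a - 1 - a))) / 2 <
        (∫ x in a..b, x ^ (c - 1) * Real.exp x) := by
  obtain ⟨hc0, hc1⟩ := hc
  have hr : -1 < c - 1 := by linarith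
  have h_split := integral_rpow_mul_exp (a := a) (b := b) hr
  rw [sub_add_cancel] at h_split
  have h_low := sub_le_integral_rpow_mul_exp_sub_one ha hab.le hr (by linarith)
  have h_up := integral_rpow_mul_exp_sub_one_le ha hab.le hr
  have h_pos : 0 < (b ^ c - a ^ c) / c := div_pos (sub_pos.2 (rpow_lt_rpow ha hab hc0)) hc0
  refine ⟨?_, ?_, ?_⟩ <;> linarith
end

section
/- For α ∈ [1/2, 1), δ = 1−α, and θ ∈ (0,π), define H_α(θ) = [sinc(δθ)/sinc(θ)]·[sinc(αθ)/sinc(θ)]^(α/δ), where sinc(x) = sin(x)/x. Then ln H_α(θ)/α = 2·Σ_{n=1}^∞ [ζ(2n)/(2n·π^(2n))]·(Σ_{k=0}^{2n−1}(α^k + δ^k))·θ^(2n), and this quantity is at most ln H_1(θ), where H_1(θ) = exp(1 − cosθ/sinc(θ))/sinc(θ). -/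
/-!
Put `L(y) = -log (sinc y)`. Taking logarithms in Euler's product
`sin (π x) = π x ∏ (1 - x²/j²)` and expanding every `-log (1 - x²/j²)` as a power series in
`x²/j²`, summing the resulting nonnegative double series over `j` first gives
`L(y) = Σ ζ(2n)/n · (y/π)^(2n)` for `|y| < π`. Since
`ln H_α(θ) = (L θ - L (δθ)) + (α/δ) (L θ - L (αθ))` and `(1 - δ^m)/α`, `(1 - α^m)/δ` are geometric
sums, this yields the series for `ln H_α(θ) / α`. The same double-series argument applied to the
Mittag-Leffler expansion of the cotangent gives `1 - θ cot θ = Σ 2 ζ(2n) (θ/π)^(2n)`, so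
`ln H_1(θ)` has coefficients `ζ(2n)/n · (2n + 1) (θ/π)^(2n)`; the bound follows termwise from
`Σ_{k<2n} (α^k + δ^k) ≤ 2 + (2n - 1)(α + δ) = 2n + 1`.
-/

open Real

/-- `sinc x = sin x / x` with `sinc 0 = 1`. -/
noncomputable def sinc (x : ℝ) : ℝ := if x = 0 then 1 else Real.sin x / x

/-- `ζ(n)` as a real number (for even integer arguments `ζ` is real). -/
noncomputable def zetaR (n : ℕ) : ℝ := (riemannZeta (n : ℂ)).re

open Filter Topology

lemma hasSum_zetaR {p : ℕ} (hp : 1 < p) :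
    HasSum (fun n : ℕ => 1 / ((n : ℝ) + 1) ^ p) (zetaR p) := by
  have hs : Summable (fun n : ℕ => 1 / (n : ℝ) ^ p) := Real.summable_one_div_nat_pow.mpr hp
  have hζ : zetaR p = ∑' n : ℕ, 1 / (n : ℝ) ^ p := by
    rw [zetaR, zeta_nat_eq_tsum_of_gt_one hp, ← Complex.ofReal_re (∑' n : ℕ, 1 / (n : ℝ) ^ p),
      Complex.ofReal_tsum]
    push_cast
    rfl
  have h := (hasSum_nat_add_iff' 1).mpr (hζ ▸ hs.hasSum)
  simpa [Nat.pos_iff_ne_zero.mp (zero_lt_one.trans hp)] using h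

lemma zetaR_nonneg {p : ℕ} (hp : 1 < p) : 0 ≤ zetaR p :=
  (hasSum_zetaR hp).nonneg fun n => by positivity

lemma hasSum_zetaR_mul_of_hasSum_rows {x S : ℝ} {c F : ℕ → ℝ} (hc : ∀ m, 0 ≤ c m)
    (hrow : ∀ j : ℕ, HasSum (fun m => c m * (x ^ 2 / ((j : ℝ) + 1) ^ 2) ^ (m + 1)) (F j))
    (hF : HasSum F S) :
    HasSum (fun m => c m * zetaR (2 * (m + 1)) * x ^ (2 * (m + 1))) S := by
  set f : ℕ × ℕ → ℝ := fun q => c q.2 * (x ^ 2 / ((q.1 : ℝ) + 1) ^ 2) ^ (q.2 + 1) with hf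
  have hf_nonneg : 0 ≤ f := fun q => mul_nonneg (hc q.2) (by positivity)
  have hf_summable : Summable f := (summable_prod_of_nonneg hf_nonneg).mpr
    ⟨fun j => (hrow j).summable, hF.summable.congr fun j => (hrow j).tsum_eq.symm⟩
  have htotal : ∑' q, f q = S := (hf_summable.hasSum.prod_fiberwise hrow).unique hF
  have hcol (m : ℕ) :
      HasSum (fun j => f (j, m)) (c m * zetaR (2 * (m + 1)) * x ^ (2 * (m + 1))) := by
    have hterm : (fun j => f (j, m)) =
        fun j : ℕ => c m * x ^ (2 * (m + 1)) * (1 / ((j : ℝ) + 1) ^ (2 * (m + 1))) := by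
      funext j
      simp only [hf, div_pow, ← pow_mul]
      ring
    rw [hterm, mul_right_comm]
    exact (hasSum_zetaR (by omega)).mul_left _
  rw [← htotal]
  exact ((Equiv.prodComm ℕ ℕ).hasSum_iff.mpr hf_summable.hasSum).prod_fiberwise hcol

lemma sinc_eq_real_sinc : _root_.sinc = Real.sinc := rfl

lemma sinc_pos {y : ℝ} (hy : |y| < π) : 0 < Real.sinc y := by
  have hpos {z : ℝ} (h0 : 0 < z) (hπ : z < π) : 0 < Real.sinc z := by
    rw [sinc_of_ne_zero h0.ne']
    exact div_pos (sin_pos_of_pos_of_lt_pi h0 hπ) h0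
  rcases lt_trichotomy y 0 with h | rfl | h
  · rw [← sinc_neg]
    exact hpos (neg_pos.mpr h) ((neg_le_abs y).trans_lt hy)
  · simp
  · exact hpos h ((le_abs_self y).trans_lt hy)

lemma tendsto_prod_one_sub_sq_div_sinc (x : ℝ) :
    Tendsto (fun n => ∏ j ∈ Finset.range n, (1 - x ^ 2 / ((j : ℝ) + 1) ^ 2))
      atTop (𝓝 (Real.sinc (π * x))) := by
  rcases eq_or_ne x 0 with rfl | hx
  · simp
  have hπx : π * x ≠ 0 := mul_ne_zero pi_ne_zero hx
  rw [sinc_of_ne_zero hπx]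
  refine ((tendsto_euler_sin_prod x).div_const (π * x)).congr fun n => ?_
  rw [mul_div_right_comm, div_self hπx, one_mul]

lemma hasSum_cot_series {x : ℝ} (hx : ∀ n : ℤ, (n : ℝ) ≠ x) :
    HasSum (fun n : ℕ => 1 / (x - (n + 1)) + 1 / (x + (n + 1))) (π * cot (π * x) - 1 / x) := by
  have hz : (x : ℂ) ∈ Complex.integerComplement := fun ⟨n, hn⟩ => hx n (by exact_mod_cast hn)
  have h := (summable_cotTerm hz).hasSum
  rw [← cot_series_rep' hz] at h
  rw [← Complex.hasSum_ofReal]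
  push_cast [Complex.ofReal_cot]
  exact h

lemma sq_div_succ_sq_mem_Ico {x : ℝ} (hx : |x| < 1) (j : ℕ) :
    x ^ 2 / ((j : ℝ) + 1) ^ 2 ∈ Set.Ico 0 1 := by
  refine ⟨by positivity, (div_le_self (sq_nonneg x) ?_).trans_lt ((sq_lt_one_iff_abs_lt_one x).mpr hx)⟩
  exact one_le_pow₀ (by linarith [j.cast_nonneg (α := ℝ)])

lemma hasSum_neg_log_sinc {y : ℝ} (hy : |y| < π) :
    HasSum (fun m : ℕ => ((m : ℝ) + 1)⁻¹ * zetaR (2 * (m + 1)) * (y / π) ^ (2 * (m + 1)))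
      (-log (Real.sinc y)) := by
  have hx : |y / π| < 1 := by rwa [abs_div, abs_of_pos pi_pos, div_lt_one pi_pos]
  have ht := sq_div_succ_sq_mem_Ico hx
  refine hasSum_zetaR_mul_of_hasSum_rows (F := fun j => -log (1 - (y / π) ^ 2 / ((j : ℝ) + 1) ^ 2))
    (fun m => by positivity) (fun j => ?_) ?_
  · refine (hasSum_pow_div_log_of_abs_lt_one ?_).congr_fun fun m => inv_mul_eq_div _ _
    rw [abs_of_nonneg (ht j).1]
    exact (ht j).2
  · have hpos (j : ℕ) : 0 < 1 - (y / π) ^ 2 / ((j : ℝ) + 1) ^ 2 := sub_pos.mpr (ht j).2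
    refine (hasSum_iff_tendsto_nat_of_nonneg (fun j => ?_) _).mpr ?_
    · exact neg_nonneg.mpr (log_nonpos (hpos j).le (by linarith [(ht j).1]))
    have hprod := tendsto_prod_one_sub_sq_div_sinc (y / π)
    rw [mul_div_cancel₀ y pi_ne_zero] at hprod
    have hlim := ((continuousAt_log (sinc_pos hy).ne').tendsto.comp hprod).neg
    refine hlim.congr fun n => ?_
    simp [log_prod fun j _ => (hpos j).ne']

lemma hasSum_one_sub_cos_div_sinc {y : ℝ} (hy : |y| < π) :
    HasSum (fun m : ℕ => 2 * zetaR (2 * (m + 1)) * (y / π) ^ (2 * (m + 1)))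
      (1 - cos y / Real.sinc y) := by
  have hx : |y / π| < 1 := by rwa [abs_div, abs_of_pos pi_pos, div_lt_one pi_pos]
  have ht := sq_div_succ_sq_mem_Ico hx
  refine hasSum_zetaR_mul_of_hasSum_rows (c := fun _ => 2)
    (F := fun j => 2 * ((y / π) ^ 2 / ((j : ℝ) + 1) ^ 2) * (1 - (y / π) ^ 2 / ((j : ℝ) + 1) ^ 2)⁻¹)
    (fun _ => zero_le_two) (fun j => ?_) ?_
  · exact ((hasSum_geometric_of_lt_one (ht j).1 (ht j).2).mul_left _).congr_fun
      fun m => by ring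
  rcases eq_or_ne y 0 with rfl | hy0
  · simp
  have hnot_int (n : ℤ) : (n : ℝ) ≠ y / π := by
    intro hn
    have : n = 0 := by
      rw [← hn] at hx
      exact Int.abs_lt_one_iff.mp (by exact_mod_cast hx)
    simp [this, hy0, eq_comm] at hn
  have h := (hasSum_cot_series hnot_int).mul_left (-(y / π))
  have hval : -(y / π) * (π * cot (π * (y / π)) - 1 / (y / π)) = 1 - cos y / Real.sinc y := by
    rw [mul_div_cancel₀ y pi_ne_zero, cot_eq_cos_div_sin, sinc_of_ne_zero hy0]
    field_simp
    ring
  rw [hval] at h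
  refine h.congr_fun fun n => ?_
  have hminus : y / π - (n + 1) ≠ 0 := sub_ne_zero.mpr (by exact_mod_cast (hnot_int (n + 1)).symm)
  have hplus : y / π + (n + 1) ≠ 0 := by
    rw [← sub_neg_eq_add]
    exact sub_ne_zero.mpr (by exact_mod_cast (hnot_int (-(n + 1))).symm)
  generalize y / π = x at hminus hplus ⊢
  have hden : ((n : ℝ) + 1) ^ 2 - x ^ 2 ≠ 0 := by
    rw [show ((n : ℝ) + 1) ^ 2 - x ^ 2 = -((x - (n + 1)) * (x + (n + 1))) by ring]
    exact neg_ne_zero.mpr (mul_ne_zero hminus hplus)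
  field_simp
  ring

lemma sum_range_pow_add_one_sub_pow {a : ℝ} (ha : a ≠ 0) (ha1 : 1 - a ≠ 0) (p : ℕ) :
    ∑ k ∈ Finset.range p, (a ^ k + (1 - a) ^ k) =
      ((1 - (1 - a) ^ p) + a / (1 - a) * (1 - a ^ p)) / a := by
  rw [Finset.sum_add_distrib, ← mul_neg_geom_sum (1 - a), ← mul_neg_geom_sum a, sub_sub_cancel]
  field_simp
  ring

lemma sum_range_pow_add_pow_le {a b : ℝ} (ha : 0 ≤ a) (hb : 0 ≤ b) (hab : a + b ≤ 1) (n : ℕ) :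
    ∑ k ∈ Finset.range n, (a ^ k + b ^ k) ≤ n + 1 := by
  cases n with
  | zero => simp
  | succ n =>
    have hterm : ∀ k ∈ Finset.range n, a ^ (k + 1) + b ^ (k + 1) ≤ 1 := fun k _ =>
      le_trans (add_le_add (pow_le_of_le_one ha (by linarith) k.succ_ne_zero)
        (pow_le_of_le_one hb (by linarith) k.succ_ne_zero)) hab
    have := Finset.sum_le_card_nsmul _ _ _ hterm
    rw [Finset.sum_range_succ', pow_zero, pow_zero]
    simp only [Finset.card_range, nsmul_eq_mul, mul_one] at this
    push_cast
    linarith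

/-- `H_α(θ)` of the statement, with `δ = 1 - α`. -/
noncomputable def sincRatio (α θ : ℝ) : ℝ :=
  (Real.sinc ((1 - α) * θ) / Real.sinc θ) * (Real.sinc (α * θ) / Real.sinc θ) ^ (α / (1 - α))

lemma abs_mul_lt_pi {c θ : ℝ} (hc0 : 0 ≤ c) (hc1 : c ≤ 1) (hθ : |θ| < π) : |c * θ| < π := by
  rw [abs_mul, abs_of_nonneg hc0]
  nlinarith [abs_nonneg θ]

lemma log_sincRatio_div {α θ : ℝ} (hα0 : 0 < α) (hα1 : α < 1) (hθ : |θ| < π) :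
    log (sincRatio α θ) / α =
      ((-log (Real.sinc θ) - -log (Real.sinc ((1 - α) * θ))) +
        α / (1 - α) * (-log (Real.sinc θ) - -log (Real.sinc (α * θ)))) / α := by
  have hs := sinc_pos hθ
  have hsδ := sinc_pos (abs_mul_lt_pi (sub_nonneg.mpr hα1.le) (by linarith) hθ)
  have hsα := sinc_pos (abs_mul_lt_pi hα0.le hα1.le hθ)
  rw [sincRatio, log_mul (by positivity) (by positivity), log_rpow (by positivity),
    log_div hsδ.ne' hs.ne', log_div hsα.ne' hs.ne']
  ring

lemma hasSum_log_sincRatio_div {α θ : ℝ} (hα0 : 0 < α) (hα1 : α < 1) (hθ : |θ| < π) :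
    HasSum (fun n : ℕ =>
        2 * zetaR (2 * (n + 1)) / ((2 * ((n : ℝ) + 1)) * π ^ (2 * (n + 1))) *
          (∑ k ∈ Finset.range (2 * (n + 1)), (α ^ k + (1 - α) ^ k)) * θ ^ (2 * (n + 1)))
      (log (sincRatio α θ) / α) := by
  have hδθ := hasSum_neg_log_sinc (abs_mul_lt_pi (sub_nonneg.mpr hα1.le) (by linarith) hθ)
  have hαθ := hasSum_neg_log_sinc (abs_mul_lt_pi hα0.le hα1.le hθ)
  rw [log_sincRatio_div hα0 hα1 hθ]
  refine ((((hasSum_neg_log_sinc hθ).sub hδθ).add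
    (((hasSum_neg_log_sinc hθ).sub hαθ).mul_left _)).div_const α).congr_fun fun n => ?_
  rw [sum_range_pow_add_one_sub_pow hα0.ne' (by linarith), mul_div_assoc (1 - α), mul_div_assoc α,
    mul_pow, mul_pow, ← div_mul_cancel₀ (θ ^ _) (pow_ne_zero (2 * (n + 1)) pi_ne_zero), ← div_pow]
  field_simp

lemma log_sincRatio_div_le {α θ : ℝ} (hα0 : 0 < α) (hα1 : α < 1) (hθ : |θ| < π) :
    log (sincRatio α θ) / α ≤ log (exp (1 - cos θ / Real.sinc θ) / Real.sinc θ) := by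
  rw [log_div (exp_ne_zero _) (sinc_pos hθ).ne', log_exp, sub_eq_add_neg]
  refine hasSum_le (fun n => ?_) (hasSum_log_sincRatio_div hα0 hα1 hθ)
    ((hasSum_one_sub_cos_div_sinc hθ).add (hasSum_neg_log_sinc hθ))
  have hsum := sum_range_pow_add_pow_le hα0.le (sub_nonneg.mpr hα1.le) (by linarith) (2 * (n + 1))
  have hcoeff : 0 ≤ ((n : ℝ) + 1)⁻¹ * zetaR (2 * (n + 1)) * (θ / π) ^ (2 * (n + 1)) :=
    mul_nonneg (by have := zetaR_nonneg (p := 2 * (n + 1)) (by omega); positivity)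
      ((even_two_mul (n + 1)).pow_nonneg _)
  calc _ = ((n : ℝ) + 1)⁻¹ * zetaR (2 * (n + 1)) * (θ / π) ^ (2 * (n + 1)) *
        ∑ k ∈ Finset.range (2 * (n + 1)), (α ^ k + (1 - α) ^ k) := by
        rw [div_pow]
        field_simp
    _ ≤ ((n : ℝ) + 1)⁻¹ * zetaR (2 * (n + 1)) * (θ / π) ^ (2 * (n + 1)) * (2 * ((n : ℝ) + 1) + 1) :=
        mul_le_mul_of_nonneg_left (by push_cast at hsum; linarith) hcoeff
    _ = _ := by
        field_simp

/-- For `α ∈ [1/2,1)`, `δ = 1−α`, `θ ∈ (0,π)`, with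
`H_α(θ) = (sinc(δθ)/sinc θ)·(sinc(αθ)/sinc θ)^(α/δ)`:
`ln H_α(θ)/α = 2·Σ_{n≥1} [ζ(2n)/(2n·π^(2n))]·(Σ_{k=0}^{2n−1}(α^k+δ^k))·θ^(2n)`,
and this is at most `ln H_1(θ)` where `H_1(θ) = exp(1 − cos θ/sinc θ)/sinc θ`. -/
theorem stmt17 (α θ : ℝ) (hα : α ∈ Set.Ico (1 / 2 : ℝ) 1) (hθ : θ ∈ Set.Ioo 0 π) :
    HasSum (fun n : ℕ =>
        2 * zetaR (2 * (n + 1)) / ((2 * ((n : ℝ) + 1)) * π ^ (2 * (n + 1))) *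
          (∑ k ∈ Finset.range (2 * (n + 1)), (α ^ k + (1 - α) ^ k)) * θ ^ (2 * (n + 1)))
      (Real.log ((_root_.sinc ((1 - α) * θ) / _root_.sinc θ) * (_root_.sinc (α * θ) / _root_.sinc θ) ^ (α / (1 - α))) / α) ∧
    Real.log ((_root_.sinc ((1 - α) * θ) / _root_.sinc θ) * (_root_.sinc (α * θ) / _root_.sinc θ) ^ (α / (1 - α))) / α ≤
      Real.log (Real.exp (1 - Real.cos θ / _root_.sinc θ) / _root_.sinc θ) := by
  have hα0 : 0 < α := by linarith [hα.1]
  have hθ' : |θ| < π := by rw [abs_of_pos hθ.1]; exact hθ.2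
  rw [sinc_eq_real_sinc]
  exact ⟨hasSum_log_sincRatio_div hα0 hα.2 hθ', log_sincRatio_div_le hα0 hα.2 hθ'⟩
end
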